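/- Characterisation of weak clash free normal forms: a term t of the λ!-calculus is both →w-normal and weak clash free if and only if t belongs to the set no_wcf generated by the grammars ne_wcf, na_wcf, nb_wcf, no_wcf. -/
import Mathlib


/-! # The Bang Calculus Revisited: common definitions.

Terms are represented with de Bruijn indices, so that all the meta-level
substitutions are capture-avoiding by construction. -/

/-- Terms of the λ!-calculus.  `esub t u` is the explicit substitution
`t[0\u]`: the (anonymous) binder scopes over `t`, not over `u`. -/
inductive Tm : Type
  | var : ℕ → Tm
  | app : Tm → Tm → Tm
  | lam : Tm → Tm
  | bang : Tm → Tm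
  | der : Tm → Tm
  | esub : Tm → Tm → Tm
  deriving DecidableEq

namespace Tm

/-- lifting a renaming under a binder -/
def liftR (f : ℕ → ℕ) : ℕ → ℕ
  | 0 => 0
  | k + 1 => f k + 1

/-- renaming of free variables -/
def rename (f : ℕ → ℕ) : Tm → Tm
  | var k => var (f k)
  | app t u => app (rename f t) (rename f u)
  | lam t => lam (rename (liftR f) t)
  | bang t => bang (rename f t)
  | der t => der (rename f t)
  | esub t u => esub (rename (liftR f) t) (rename f u)

/-- lifting a simultaneous substitution under a binder -/
def liftS (σ : ℕ → Tm) : ℕ → Tm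
  | 0 => var 0
  | k + 1 => rename (· + 1) (σ k)

/-- simultaneous (capture-avoiding) substitution -/
def subst (σ : ℕ → Tm) : Tm → Tm
  | var k => σ k
  | app t u => app (subst σ t) (subst σ u)
  | lam t => lam (subst (liftS σ) t)
  | bang t => bang (subst σ t)
  | der t => der (subst σ t)
  | esub t u => esub (subst (liftS σ) t) (subst σ u)

/-- capture-avoiding substitution of `u` for the variable `0` of `t`,
where the result is placed under `n` extra binders (and `u` already lives
at that depth). -/
def substIn (n : ℕ) (u : Tm) (t : Tm) : Tm :=
  subst (fun k => match k with
    | 0 => u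
    | k + 1 => var (k + n)) t

/-- capture-avoiding meta-level substitution `t{0 := u}` -/
def subst0 (u : Tm) (t : Tm) : Tm := substIn 0 u t

/-- plugging a term into a list context `L ::= ◻ | L[x\t]`; the head of the
list is the argument of the outermost explicit substitution. -/
def plug : List Tm → Tm → Tm
  | [], s => s
  | e :: L, s => esub (plug L s) e

/-- the w-size of a term -/
def wsize : Tm → ℕ
  | var _ => 0
  | app t u => 1 + wsize t + wsize u
  | lam t => 1 + wsize t
  | bang _ => 0
  | der t => 1 + wsize t
  | esub t u => 1 + wsize t + wsize u

end Tm

/-- the names of the three rewriting rules of the λ!-calculus -/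
inductive Rule : Type
  | dB | sb | db
  deriving DecidableEq

open Tm in
/-- the three rewriting rules, applied at the root (at a distance) -/
inductive Root : Rule → Tm → Tm → Prop
  | dB (L : List Tm) (t u : Tm) :
      Root .dB (app (plug L (lam t)) u)
               (plug L (esub t (rename (· + L.length) u)))
  | sb (L : List Tm) (t u : Tm) :
      Root .sb (esub t (plug L (bang u))) (plug L (substIn L.length u t))
  | db (L : List Tm) (t : Tm) :
      Root .db (der (plug L (bang t))) (plug L t)

/-- closure of each rule under weak contexts (no reduction under `bang`) -/
inductive Step : Rule → Tm → Tm → Prop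
  | root {r : Rule} {t t' : Tm} : Root r t t' → Step r t t'
  | appL {r t t'} (u : Tm) : Step r t t' → Step r (Tm.app t u) (Tm.app t' u)
  | appR {r u u'} (t : Tm) : Step r u u' → Step r (Tm.app t u) (Tm.app t u')
  | lam {r t t'} : Step r t t' → Step r (Tm.lam t) (Tm.lam t')
  | der {r t t'} : Step r t t' → Step r (Tm.der t) (Tm.der t')
  | esubL {r t t'} (u : Tm) : Step r t t' → Step r (Tm.esub t u) (Tm.esub t' u)
  | esubR {r u u'} (t : Tm) : Step r u u' → Step r (Tm.esub t u) (Tm.esub t u')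

/-- the weak reduction `→w` of the λ!-calculus -/
def StepW (t t' : Tm) : Prop := ∃ r, Step r t t'

/-- counted weak reduction: `RedCnt t (b, e) u` holds iff `t →w* u` using `b`
dB-steps and `e` steps of kind s!/d!. -/
inductive RedCnt : Tm → ℕ × ℕ → Tm → Prop
  | refl (t : Tm) : RedCnt t (0, 0) t
  | db {t t₁ u : Tm} {b e : ℕ} :
      Step .dB t t₁ → RedCnt t₁ (b, e) u → RedCnt t (b + 1, e) u
  | ex {t t₁ u : Tm} {b e : ℕ} :
      (Step .sb t t₁ ∨ Step .db t t₁) → RedCnt t₁ (b, e) u →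
      RedCnt t (b, e + 1) u

mutual
  /-- neutral w-normal terms -/
  inductive NeW : Tm → Prop
    | var (k : ℕ) : NeW (Tm.var k)
    | app {t u : Tm} : NaW t → NoW u → NeW (Tm.app t u)
    | der {t : Tm} : NbW t → NeW (Tm.der t)
    | esub {t u : Tm} : NeW t → NbW u → NeW (Tm.esub t u)
  /-- neutral-abs w-normal terms -/
  inductive NaW : Tm → Prop
    | bang (t : Tm) : NaW (Tm.bang t)
    | ne {t : Tm} : NeW t → NaW t
    | esub {t u : Tm} : NaW t → NbW u → NaW (Tm.esub t u)
  /-- neutral-bang w-normal terms -/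
  inductive NbW : Tm → Prop
    | ne {t : Tm} : NeW t → NbW t
    | lam {t : Tm} : NoW t → NbW (Tm.lam t)
    | esub {t u : Tm} : NbW t → NbW u → NbW (Tm.esub t u)
  /-- w-normal terms -/
  inductive NoW : Tm → Prop
    | na {t : Tm} : NaW t → NoW t
    | nb {t : Tm} : NbW t → NoW t
end

/-- clashes -/
inductive Clash : Tm → Prop
  | appBang (L : List Tm) (t u : Tm) : Clash (Tm.app (Tm.plug L (Tm.bang t)) u)
  | esubLam (L : List Tm) (t u : Tm) : Clash (Tm.esub t (Tm.plug L (Tm.lam u)))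
  | derLam (L : List Tm) (u : Tm) : Clash (Tm.der (Tm.plug L (Tm.lam u)))
  | appLam (L : List Tm) (t u : Tm) : Clash (Tm.app t (Tm.plug L (Tm.lam u)))

/-- `WSub t s` holds iff `t = W⟨s⟩` for some weak context `W` -/
inductive WSub : Tm → Tm → Prop
  | refl (t : Tm) : WSub t t
  | appL {t s : Tm} (u : Tm) : WSub t s → WSub (Tm.app t u) s
  | appR {u s : Tm} (t : Tm) : WSub u s → WSub (Tm.app t u) s
  | lam {t s : Tm} : WSub t s → WSub (Tm.lam t) s
  | der {t s : Tm} : WSub t s → WSub (Tm.der t) s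
  | esubL {t s : Tm} (u : Tm) : WSub t s → WSub (Tm.esub t u) s
  | esubR {u s : Tm} (t : Tm) : WSub u s → WSub (Tm.esub t u) s

/-- weak clash freeness -/
def Wcf (t : Tm) : Prop := ¬ ∃ s, WSub t s ∧ Clash s

mutual
  /-- neutral weak clash free normal terms -/
  inductive NeCF : Tm → Prop
    | var (k : ℕ) : NeCF (Tm.var k)
    | app {t u : Tm} : NeCF t → NaCF u → NeCF (Tm.app t u)
    | der {t : Tm} : NeCF t → NeCF (Tm.der t)
    | esub {t u : Tm} : NeCF t → NeCF u → NeCF (Tm.esub t u)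
  /-- neutral-abs weak clash free normal terms -/
  inductive NaCF : Tm → Prop
    | bang (t : Tm) : NaCF (Tm.bang t)
    | ne {t : Tm} : NeCF t → NaCF t
    | esub {t u : Tm} : NaCF t → NeCF u → NaCF (Tm.esub t u)
  /-- neutral-bang weak clash free normal terms -/
  inductive NbCF : Tm → Prop
    | ne {t : Tm} : NeCF t → NbCF t
    | lam {t : Tm} : NoCF t → NbCF (Tm.lam t)
    | esub {t u : Tm} : NbCF t → NeCF u → NbCF (Tm.esub t u)
  /-- weak clash free normal terms -/
  inductive NoCF : Tm → Prop
    | na {t : Tm} : NaCF t → NoCF t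
    | nb {t : Tm} : NbCF t → NoCF t
end

/-- Types of system 𝒰: base types, multiset types and arrow types.  A
multiset type is given by a list of types (a representative of the multiset
it determines). -/
inductive Ty : Type
  | base : ℕ → Ty
  | mult : List Ty → Ty
  | arr : List Ty → Ty → Ty

/-- typing contexts: functions from (de Bruijn) variables to multiset types -/
abbrev Ctx := ℕ → Multiset Ty

/-- the context mapping `k` to `M` and anything else to the empty multiset -/
def Ctx.single (k : ℕ) (M : Multiset Ty) : Ctx := fun j => if j = k then M else 0

/-- removing the (type of the) bound variable `0` from a context -/
def Ctx.tail (Γ : Ctx) : Ctx := fun k => Γ (k + 1)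

/-- extending a context with a multiset type for a fresh variable `0` -/
def Ctx.cons (M : Multiset Ty) (Γ : Ctx) : Ctx := fun k =>
  match k with
  | 0 => M
  | k + 1 => Γ k

/-- Sized typing of system 𝒰: `DerU Γ t τ n` means that there is a derivation
of `Γ ⊢ t : τ` whose size (number of rules, not counting `bg`) is `n`. -/
inductive DerU : Ctx → Tm → Ty → ℕ → Prop
  | ax (k : ℕ) (σ : Ty) : DerU (Ctx.single k {σ}) (Tm.var k) σ 1
  | app {Γ Δ : Ctx} {t u : Tm} {M : List Ty} {τ : Ty} {n m : ℕ} :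
      DerU Γ t (Ty.arr M τ) n → DerU Δ u (Ty.mult M) m →
      DerU (Γ + Δ) (Tm.app t u) τ (n + m + 1)
  | abs {Γ : Ctx} {t : Tm} {τ : Ty} {n : ℕ} (M : List Ty) :
      DerU Γ t τ n → Multiset.ofList M = Γ 0 →
      DerU (Ctx.tail Γ) (Tm.lam t) (Ty.arr M τ) (n + 1)
  | es {Γ Δ : Ctx} {t u : Tm} {σ : Ty} {M : List Ty} {n m : ℕ} :
      DerU Γ t σ n → DerU Δ u (Ty.mult M) m → Multiset.ofList M = Γ 0 →
      DerU (Ctx.tail Γ + Δ) (Tm.esub t u) σ (n + m + 1)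
  | bg {t : Tm} (prs : List (Ctx × Ty × ℕ)) :
      (∀ p ∈ prs, DerU p.1 t p.2.1 p.2.2) →
      DerU ((prs.map (·.1)).sum) (Tm.bang t)
           (Ty.mult (prs.map (·.2.1))) ((prs.map (·.2.2)).sum)
  | dr {Γ : Ctx} {t : Tm} {σ : Ty} {n : ℕ} :
      DerU Γ t (Ty.mult [σ]) n → DerU Γ (Tm.der t) σ (n + 1)

/-! ## The source λ-calculus with explicit substitutions (CBN / CBV) -/

/-- terms of the λ-calculus with explicit substitutions (de Bruijn) -/
inductive Lm : Type
  | var : ℕ → Lm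
  | app : Lm → Lm → Lm
  | lam : Lm → Lm
  | esub : Lm → Lm → Lm
  deriving DecidableEq

namespace Lm

def liftR (f : ℕ → ℕ) : ℕ → ℕ
  | 0 => 0
  | k + 1 => f k + 1

def rename (f : ℕ → ℕ) : Lm → Lm
  | var k => var (f k)
  | app t u => app (rename f t) (rename f u)
  | lam t => lam (rename (liftR f) t)
  | esub t u => esub (rename (liftR f) t) (rename f u)

def liftS (σ : ℕ → Lm) : ℕ → Lm
  | 0 => var 0
  | k + 1 => rename (· + 1) (σ k)

def subst (σ : ℕ → Lm) : Lm → Lm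
  | var k => σ k
  | app t u => app (subst σ t) (subst σ u)
  | lam t => lam (subst (liftS σ) t)
  | esub t u => esub (subst (liftS σ) t) (subst σ u)

def substIn (n : ℕ) (u : Lm) (t : Lm) : Lm :=
  subst (fun k => match k with
    | 0 => u
    | k + 1 => var (k + n)) t

/-- capture-avoiding meta-level substitution `t{0 := u}` -/
def subst0 (u : Lm) (t : Lm) : Lm := substIn 0 u t

def plug : List Lm → Lm → Lm
  | [], s => s
  | e :: L, s => esub (plug L s) e

/-- values -/
def IsVal : Lm → Prop
  | var _ => True
  | lam _ => True
  | _ => False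

/-- the n-size of a term -/
def nsize : Lm → ℕ
  | var _ => 0
  | lam t => 1 + nsize t
  | app t _ => 1 + nsize t
  | esub t _ => 1 + nsize t

/-- the v-size of a term -/
def vsize : Lm → ℕ
  | var _ => 0
  | lam _ => 0
  | app t u => 1 + vsize t + vsize u
  | esub t u => 1 + vsize t + vsize u

end Lm

/-- names of the CBN rules -/
inductive NRule : Type
  | dB | s
  deriving DecidableEq

/-- call-by-name reduction (closure of dB and s under CBN contexts) -/
inductive StepN : NRule → Lm → Lm → Prop
  | dB (L : List Lm) (t u : Lm) :
      StepN .dB (Lm.app (Lm.plug L (Lm.lam t)) u)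
                (Lm.plug L (Lm.esub t (Lm.rename (· + L.length) u)))
  | s (t u : Lm) : StepN .s (Lm.esub t u) (Lm.subst0 u t)
  | appL {r t t'} (u : Lm) : StepN r t t' → StepN r (Lm.app t u) (Lm.app t' u)
  | lam {r t t'} : StepN r t t' → StepN r (Lm.lam t) (Lm.lam t')
  | esubL {r t t'} (u : Lm) : StepN r t t' → StepN r (Lm.esub t u) (Lm.esub t' u)

/-- names of the CBV rules -/
inductive VRule : Type
  | dB | sv
  deriving DecidableEq

/-- call-by-value reduction (closure of dB and sv under CBV contexts) -/
inductive StepV : VRule → Lm → Lm → Prop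
  | dB (L : List Lm) (t u : Lm) :
      StepV .dB (Lm.app (Lm.plug L (Lm.lam t)) u)
                (Lm.plug L (Lm.esub t (Lm.rename (· + L.length) u)))
  | sv (L : List Lm) (t v : Lm) (hv : Lm.IsVal v) :
      StepV .sv (Lm.esub t (Lm.plug L v)) (Lm.plug L (Lm.substIn L.length v t))
  | appL {r t t'} (u : Lm) : StepV r t t' → StepV r (Lm.app t u) (Lm.app t' u)
  | appR {r u u'} (t : Lm) : StepV r u u' → StepV r (Lm.app t u) (Lm.app t u')
  | esubL {r t t'} (u : Lm) : StepV r t t' → StepV r (Lm.esub t u) (Lm.esub t' u)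
  | esubR {r u u'} (t : Lm) : StepV r u u' → StepV r (Lm.esub t u) (Lm.esub t u')

mutual
  /-- CBN neutral terms -/
  inductive NeN : Lm → Prop
    | var (k : ℕ) : NeN (Lm.var k)
    | app {t : Lm} (u : Lm) : NeN t → NeN (Lm.app t u)
  /-- CBN normal terms -/
  inductive NoN : Lm → Prop
    | lam {t : Lm} : NoN t → NoN (Lm.lam t)
    | ne {t : Lm} : NeN t → NoN t
end

mutual
  /-- CBV (substituted) variables -/
  inductive VrV : Lm → Prop
    | var (k : ℕ) : VrV (Lm.var k)
    | esub {t u : Lm} : VrV t → NeV u → VrV (Lm.esub t u)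
  /-- CBV neutral terms -/
  inductive NeV : Lm → Prop
    | app₁ {t u : Lm} : VrV t → NoV u → NeV (Lm.app t u)
    | app₂ {t u : Lm} : NeV t → NoV u → NeV (Lm.app t u)
    | esub {t u : Lm} : NeV t → NeV u → NeV (Lm.esub t u)
  /-- CBV normal terms -/
  inductive NoV : Lm → Prop
    | lam (t : Lm) : NoV (Lm.lam t)
    | vr {t : Lm} : VrV t → NoV t
    | ne {t : Lm} : NeV t → NoV t
    | esub {t u : Lm} : NoV t → NeV u → NoV (Lm.esub t u)
end

/-- counted CBN reduction, recording the number of dB- and s-steps -/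
inductive RedCntN : Lm → ℕ × ℕ → Lm → Prop
  | refl (t : Lm) : RedCntN t (0, 0) t
  | db {t t₁ u : Lm} {b e : ℕ} :
      StepN .dB t t₁ → RedCntN t₁ (b, e) u → RedCntN t (b + 1, e) u
  | s {t t₁ u : Lm} {b e : ℕ} :
      StepN .s t t₁ → RedCntN t₁ (b, e) u → RedCntN t (b, e + 1) u

/-- counted CBV reduction, recording the number of dB- and sv-steps -/
inductive RedCntV : Lm → ℕ × ℕ → Lm → Prop
  | refl (t : Lm) : RedCntV t (0, 0) t
  | db {t t₁ u : Lm} {b e : ℕ} :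
      StepV .dB t t₁ → RedCntV t₁ (b, e) u → RedCntV t (b + 1, e) u
  | sv {t t₁ u : Lm} {b e : ℕ} :
      StepV .sv t t₁ → RedCntV t₁ (b, e) u → RedCntV t (b, e + 1) u

/-- the CBN embedding into the λ!-calculus -/
def cbn : Lm → Tm
  | .var k => .var k
  | .lam t => .lam (cbn t)
  | .app t u => .app (cbn t) (.bang (cbn u))
  | .esub t u => .esub (cbn t) (.bang (cbn u))

/-- `deBang t = some s'` iff `t = L⟨!s⟩` and `s' = L⟨s⟩` -/
def deBang : Tm → Option Tm
  | .bang s => some s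
  | .esub t e => (deBang t).map (fun s => Tm.esub s e)
  | _ => none

/-- the CBV embedding into the λ!-calculus -/
def cbv : Lm → Tm
  | .var k => .bang (.var k)
  | .lam t => .bang (.lam (cbv t))
  | .app t u =>
      match deBang (cbv t) with
      | some r => Tm.app r (cbv u)
      | none => Tm.app (.der (cbv t)) (cbv u)
  | .esub t u => .esub (cbv t) (cbv u)

/-- Sized typing of system 𝒩 (call-by-name): `DerN Γ t τ n` means that there
is a derivation of `Γ ⊢ t : τ` of size `n` (counting all rules). -/
inductive DerN : Ctx → Lm → Ty → ℕ → Prop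
  | ax (k : ℕ) (σ : Ty) : DerN (Ctx.single k {σ}) (Lm.var k) σ 1
  | app {Γ : Ctx} {t u : Lm} {τ : Ty} {n : ℕ} (prs : List (Ctx × Ty × ℕ)) :
      DerN Γ t (Ty.arr (prs.map (·.2.1)) τ) n →
      (∀ p ∈ prs, DerN p.1 u p.2.1 p.2.2) →
      DerN (Γ + (prs.map (·.1)).sum) (Lm.app t u) τ
           (n + (prs.map (·.2.2)).sum + 1)
  | abs {Γ : Ctx} {t : Lm} {τ : Ty} {n : ℕ} (M : List Ty) :
      DerN Γ t τ n → Multiset.ofList M = Γ 0 →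
      DerN (Ctx.tail Γ) (Lm.lam t) (Ty.arr M τ) (n + 1)
  | es {Γ : Ctx} {t u : Lm} {τ : Ty} {n : ℕ} (prs : List (Ctx × Ty × ℕ)) :
      DerN Γ t τ n →
      Multiset.ofList (prs.map (·.2.1)) = Γ 0 →
      (∀ p ∈ prs, DerN p.1 u p.2.1 p.2.2) →
      DerN (Ctx.tail Γ + (prs.map (·.1)).sum) (Lm.esub t u) τ
           (n + (prs.map (·.2.2)).sum + 1)

/-- Sized typing of system 𝒱 (call-by-value): `DerV Γ t τ n` means that there
is a derivation of `Γ ⊢ t : τ` of size `n` (each rule counts 1, except that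
`ax` counts the cardinal of its multiset and `abs` contributes the sizes of
its premises plus the number of premises). -/
inductive DerV : Ctx → Lm → Ty → ℕ → Prop
  | ax (k : ℕ) (M : List Ty) :
      DerV (Ctx.single k (Multiset.ofList M)) (Lm.var k) (Ty.mult M) M.length
  | es {Γ Δ : Ctx} {t u : Lm} {σ : Ty} {M : List Ty} {n m : ℕ} :
      DerV Γ t σ n → DerV Δ u (Ty.mult M) m → Multiset.ofList M = Γ 0 →
      DerV (Ctx.tail Γ + Δ) (Lm.esub t u) σ (n + m + 1)
  | abs {t : Lm} (prs : List (Ctx × List Ty × Ty × ℕ)) :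
      (∀ p ∈ prs, DerV p.1 t p.2.2.1 p.2.2.2) →
      (∀ p ∈ prs, Multiset.ofList p.2.1 = p.1 0) →
      DerV ((prs.map (fun p => Ctx.tail p.1)).sum) (Lm.lam t)
           (Ty.mult (prs.map (fun p => Ty.arr p.2.1 p.2.2.1)))
           ((prs.map (·.2.2.2)).sum + prs.length)
  | app {Γ Δ : Ctx} {t u : Lm} {M : List Ty} {τ : Ty} {n m : ℕ} :
      DerV Γ t (Ty.mult [Ty.arr M τ]) n → DerV Δ u (Ty.mult M) m →
      DerV (Γ + Δ) (Lm.app t u) τ (n + m + 1)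

/-! ### Auxiliary notions for the characterisation of wcf normal forms -/

/-- `t = L⟨!s⟩` for some list context `L` -/
def IsBangL (t : Tm) : Prop := ∃ L s, t = Tm.plug L (Tm.bang s)
/-- `t = L⟨λx.s⟩` for some list context `L` -/
def IsAbsL (t : Tm) : Prop := ∃ L s, t = Tm.plug L (Tm.lam s)
/-- `→w`-normality -/
def NormalW (t : Tm) : Prop := ∀ u, ¬ StepW t u

@[simp] lemma isBangL_var (k : ℕ) : ¬ IsBangL (Tm.var k) := by
  rintro ⟨(_ | ⟨e, L⟩), s, h⟩ <;> simp [Tm.plug] at h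
@[simp] lemma isBangL_app (t u : Tm) : ¬ IsBangL (Tm.app t u) := by
  rintro ⟨(_ | ⟨e, L⟩), s, h⟩ <;> simp [Tm.plug] at h
@[simp] lemma isBangL_lam (t : Tm) : ¬ IsBangL (Tm.lam t) := by
  rintro ⟨(_ | ⟨e, L⟩), s, h⟩ <;> simp [Tm.plug] at h
@[simp] lemma isBangL_der (t : Tm) : ¬ IsBangL (Tm.der t) := by
  rintro ⟨(_ | ⟨e, L⟩), s, h⟩ <;> simp [Tm.plug] at h
@[simp] lemma isBangL_bang (t : Tm) : IsBangL (Tm.bang t) :=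
  ⟨[], t, rfl⟩
@[simp] lemma isBangL_esub (t u : Tm) : IsBangL (Tm.esub t u) ↔ IsBangL t := by
  constructor
  · rintro ⟨(_ | ⟨e, L⟩), s, h⟩
    · simp [Tm.plug] at h
    · simp only [Tm.plug, Tm.esub.injEq] at h
      exact ⟨L, s, h.1⟩
  · rintro ⟨L, s, rfl⟩
    exact ⟨u :: L, s, rfl⟩

@[simp] lemma isAbsL_var (k : ℕ) : ¬ IsAbsL (Tm.var k) := by
  rintro ⟨(_ | ⟨e, L⟩), s, h⟩ <;> simp [Tm.plug] at h
@[simp] lemma isAbsL_app (t u : Tm) : ¬ IsAbsL (Tm.app t u) := by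
  rintro ⟨(_ | ⟨e, L⟩), s, h⟩ <;> simp [Tm.plug] at h
@[simp] lemma isAbsL_bang (t : Tm) : ¬ IsAbsL (Tm.bang t) := by
  rintro ⟨(_ | ⟨e, L⟩), s, h⟩ <;> simp [Tm.plug] at h
@[simp] lemma isAbsL_der (t : Tm) : ¬ IsAbsL (Tm.der t) := by
  rintro ⟨(_ | ⟨e, L⟩), s, h⟩ <;> simp [Tm.plug] at h
@[simp] lemma isAbsL_lam (t : Tm) : IsAbsL (Tm.lam t) :=
  ⟨[], t, rfl⟩
@[simp] lemma isAbsL_esub (t u : Tm) : IsAbsL (Tm.esub t u) ↔ IsAbsL t := by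
  constructor
  · rintro ⟨(_ | ⟨e, L⟩), s, h⟩
    · simp [Tm.plug] at h
    · simp only [Tm.plug, Tm.esub.injEq] at h
      exact ⟨L, s, h.1⟩
  · rintro ⟨L, s, rfl⟩
    exact ⟨u :: L, s, rfl⟩

/-! ### Compositional characterisations of normality -/

lemma normalW_var (k : ℕ) : NormalW (Tm.var k) := by
  rintro u ⟨r, hs⟩
  cases hs with
  | root h => cases h

lemma normalW_bang (t : Tm) : NormalW (Tm.bang t) := by
  rintro u ⟨r, hs⟩
  cases hs with
  | root h => cases h

lemma normalW_app {t u : Tm} :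
    NormalW (Tm.app t u) ↔ ¬ IsAbsL t ∧ NormalW t ∧ NormalW u := by
  constructor
  · intro h
    refine ⟨?_, ?_, ?_⟩
    · rintro ⟨L, s, rfl⟩
      exact h _ ⟨.dB, .root (Root.dB L s u)⟩
    · rintro v ⟨r, hs⟩; exact h _ ⟨r, .appL u hs⟩
    · rintro v ⟨r, hs⟩; exact h _ ⟨r, .appR t hs⟩
  · rintro ⟨hna, ht, hu⟩ v ⟨r, hs⟩
    cases hs with
    | root h => cases h with | dB L t₀ u₀ => exact hna ⟨L, t₀, rfl⟩
    | appL _ hs => exact ht _ ⟨_, hs⟩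
    | appR _ hs => exact hu _ ⟨_, hs⟩

lemma normalW_lam {t : Tm} : NormalW (Tm.lam t) ↔ NormalW t := by
  constructor
  · rintro h v ⟨r, hs⟩; exact h _ ⟨r, .lam hs⟩
  · rintro h v ⟨r, hs⟩
    cases hs with
    | root h' => cases h'
    | lam hs => exact h _ ⟨_, hs⟩

lemma normalW_der {t : Tm} :
    NormalW (Tm.der t) ↔ ¬ IsBangL t ∧ NormalW t := by
  constructor
  · intro h
    refine ⟨?_, ?_⟩
    · rintro ⟨L, s, rfl⟩
      exact h _ ⟨.db, .root (Root.db L s)⟩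
    · rintro v ⟨r, hs⟩; exact h _ ⟨r, .der hs⟩
  · rintro ⟨hnb, ht⟩ v ⟨r, hs⟩
    cases hs with
    | root h => cases h with | db L t₀ => exact hnb ⟨L, t₀, rfl⟩
    | der hs => exact ht _ ⟨_, hs⟩

lemma normalW_esub {t u : Tm} :
    NormalW (Tm.esub t u) ↔ ¬ IsBangL u ∧ NormalW t ∧ NormalW u := by
  constructor
  · intro h
    refine ⟨?_, ?_, ?_⟩
    · rintro ⟨L, s, rfl⟩
      exact h _ ⟨.sb, .root (Root.sb L t s)⟩
    · rintro v ⟨r, hs⟩; exact h _ ⟨r, .esubL u hs⟩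
    · rintro v ⟨r, hs⟩; exact h _ ⟨r, .esubR t hs⟩
  · rintro ⟨hnb, ht, hu⟩ v ⟨r, hs⟩
    cases hs with
    | root h => cases h with | sb L t₀ u₀ => exact hnb ⟨L, u₀, rfl⟩
    | esubL _ hs => exact ht _ ⟨_, hs⟩
    | esubR _ hs => exact hu _ ⟨_, hs⟩

/-! ### Compositional characterisations of weak clash freeness -/

lemma wcf_var (k : ℕ) : Wcf (Tm.var k) := by
  rintro ⟨s, hw, hc⟩
  cases hw; cases hc

lemma wcf_bang (t : Tm) : Wcf (Tm.bang t) := by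
  rintro ⟨s, hw, hc⟩
  cases hw; cases hc

lemma wcf_app {t u : Tm} :
    Wcf (Tm.app t u) ↔ ¬ IsBangL t ∧ ¬ IsAbsL u ∧ Wcf t ∧ Wcf u := by
  constructor
  · intro h
    refine ⟨?_, ?_, ?_, ?_⟩
    · rintro ⟨L, s, rfl⟩; exact h ⟨_, .refl _, .appBang L s u⟩
    · rintro ⟨L, s, rfl⟩; exact h ⟨_, .refl _, .appLam L t s⟩
    · rintro ⟨s, hw, hc⟩; exact h ⟨s, .appL u hw, hc⟩
    · rintro ⟨s, hw, hc⟩; exact h ⟨s, .appR t hw, hc⟩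
  · rintro ⟨hb, ha, ht, hu⟩ ⟨s, hw, hc⟩
    cases hw with
    | refl =>
      cases hc with
      | appBang L t₀ u₀ => exact hb ⟨L, t₀, rfl⟩
      | appLam L t₀ u₀ => exact ha ⟨L, u₀, rfl⟩
    | appL _ hw => exact ht ⟨_, hw, hc⟩
    | appR _ hw => exact hu ⟨_, hw, hc⟩

lemma wcf_lam {t : Tm} : Wcf (Tm.lam t) ↔ Wcf t := by
  constructor
  · rintro h ⟨s, hw, hc⟩; exact h ⟨s, .lam hw, hc⟩
  · rintro h ⟨s, hw, hc⟩
    cases hw with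
    | refl => cases hc
    | lam hw => exact h ⟨_, hw, hc⟩

lemma wcf_der {t : Tm} : Wcf (Tm.der t) ↔ ¬ IsAbsL t ∧ Wcf t := by
  constructor
  · intro h
    refine ⟨?_, ?_⟩
    · rintro ⟨L, s, rfl⟩; exact h ⟨_, .refl _, .derLam L s⟩
    · rintro ⟨s, hw, hc⟩; exact h ⟨s, .der hw, hc⟩
  · rintro ⟨ha, ht⟩ ⟨s, hw, hc⟩
    cases hw with
    | refl =>
      cases hc with
      | derLam L u₀ => exact ha ⟨L, u₀, rfl⟩
    | der hw => exact ht ⟨_, hw, hc⟩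

lemma wcf_esub {t u : Tm} :
    Wcf (Tm.esub t u) ↔ ¬ IsAbsL u ∧ Wcf t ∧ Wcf u := by
  constructor
  · intro h
    refine ⟨?_, ?_, ?_⟩
    · rintro ⟨L, s, rfl⟩; exact h ⟨_, .refl _, .esubLam L t s⟩
    · rintro ⟨s, hw, hc⟩; exact h ⟨s, .esubL u hw, hc⟩
    · rintro ⟨s, hw, hc⟩; exact h ⟨s, .esubR t hw, hc⟩
  · rintro ⟨ha, ht, hu⟩ ⟨s, hw, hc⟩
    cases hw with
    | refl =>
      cases hc with
      | esubLam L t₀ u₀ => exact ha ⟨L, u₀, rfl⟩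
    | esubL _ hw => exact ht ⟨_, hw, hc⟩
    | esubR _ hw => exact hu ⟨_, hw, hc⟩

/-! ### Soundness: the grammars produce normal wcf terms -/

lemma cf_sound : ∀ t : Tm,
    (NeCF t → ¬ IsAbsL t ∧ ¬ IsBangL t ∧ NormalW t ∧ Wcf t) ∧
    (NaCF t → ¬ IsAbsL t ∧ NormalW t ∧ Wcf t) ∧
    (NbCF t → ¬ IsBangL t ∧ NormalW t ∧ Wcf t) ∧
    (NoCF t → NormalW t ∧ Wcf t) := by
  intro t
  induction t with
  | var k =>
    exact ⟨fun _ => ⟨by simp, by simp, normalW_var k, wcf_var k⟩,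
      fun _ => ⟨by simp, normalW_var k, wcf_var k⟩,
      fun _ => ⟨by simp, normalW_var k, wcf_var k⟩,
      fun _ => ⟨normalW_var k, wcf_var k⟩⟩
  | app t u iht ihu =>
    have hNe : NeCF (Tm.app t u) →
        ¬ IsAbsL (Tm.app t u) ∧ ¬ IsBangL (Tm.app t u) ∧
          NormalW (Tm.app t u) ∧ Wcf (Tm.app t u) := by
      intro h
      cases h with
      | app ht hu =>
        obtain ⟨hat, hbt, hnt, hwt⟩ := iht.1 ht
        obtain ⟨hau, hnu, hwu⟩ := ihu.2.1 hu
        exact ⟨by simp, by simp, normalW_app.mpr ⟨hat, hnt, hnu⟩,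
          wcf_app.mpr ⟨hbt, hau, hwt, hwu⟩⟩
    refine ⟨hNe, ?_, ?_, ?_⟩
    · intro h
      cases h with
      | ne h => exact ⟨(hNe h).1, (hNe h).2.2.1, (hNe h).2.2.2⟩
    · intro h
      cases h with
      | ne h => exact (hNe h).2
    · intro h
      cases h with
      | na h => cases h with | ne h => exact (hNe h).2.2
      | nb h => cases h with | ne h => exact (hNe h).2.2
  | lam t iht =>
    have hNb : NbCF (Tm.lam t) →
        ¬ IsBangL (Tm.lam t) ∧ NormalW (Tm.lam t) ∧ Wcf (Tm.lam t) := by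
      intro h
      cases h with
      | ne h => cases h
      | lam h =>
        obtain ⟨hn, hw⟩ := iht.2.2.2 h
        exact ⟨by simp, normalW_lam.mpr hn, wcf_lam.mpr hw⟩
    refine ⟨?_, ?_, hNb, ?_⟩
    · intro h; cases h
    · intro h
      cases h with
      | ne h => cases h
    · intro h
      cases h with
      | na h => cases h with | ne h => cases h
      | nb h => exact (hNb h).2
  | bang t _ =>
    refine ⟨?_, fun _ => ⟨by simp, normalW_bang t, wcf_bang t⟩,
      ?_, fun _ => ⟨normalW_bang t, wcf_bang t⟩⟩
    · intro h; cases h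
    · intro h
      cases h with
      | ne h => cases h
  | der t iht =>
    have hNe : NeCF (Tm.der t) →
        ¬ IsAbsL (Tm.der t) ∧ ¬ IsBangL (Tm.der t) ∧
          NormalW (Tm.der t) ∧ Wcf (Tm.der t) := by
      intro h
      cases h with
      | der ht =>
        obtain ⟨hat, hbt, hnt, hwt⟩ := iht.1 ht
        exact ⟨by simp, by simp, normalW_der.mpr ⟨hbt, hnt⟩,
          wcf_der.mpr ⟨hat, hwt⟩⟩
    refine ⟨hNe, ?_, ?_, ?_⟩
    · intro h
      cases h with
      | ne h => exact ⟨(hNe h).1, (hNe h).2.2.1, (hNe h).2.2.2⟩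
    · intro h
      cases h with
      | ne h => exact (hNe h).2
    · intro h
      cases h with
      | na h => cases h with | ne h => exact (hNe h).2.2
      | nb h => cases h with | ne h => exact (hNe h).2.2
  | esub t u iht ihu =>
    have hNe : NeCF (Tm.esub t u) →
        ¬ IsAbsL (Tm.esub t u) ∧ ¬ IsBangL (Tm.esub t u) ∧
          NormalW (Tm.esub t u) ∧ Wcf (Tm.esub t u) := by
      intro h
      cases h with
      | esub ht hu =>
        obtain ⟨hat, hbt, hnt, hwt⟩ := iht.1 ht
        obtain ⟨hau, hbu, hnu, hwu⟩ := ihu.1 hu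
        exact ⟨by simp [hat], by simp [hbt], normalW_esub.mpr ⟨hbu, hnt, hnu⟩,
          wcf_esub.mpr ⟨hau, hwt, hwu⟩⟩
    have hNa : NaCF (Tm.esub t u) →
        ¬ IsAbsL (Tm.esub t u) ∧ NormalW (Tm.esub t u) ∧ Wcf (Tm.esub t u) := by
      intro h
      cases h with
      | ne h => exact ⟨(hNe h).1, (hNe h).2.2.1, (hNe h).2.2.2⟩
      | esub ht hu =>
        obtain ⟨hat, hnt, hwt⟩ := iht.2.1 ht
        obtain ⟨hau, hbu, hnu, hwu⟩ := ihu.1 hu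
        exact ⟨by simp [hat], normalW_esub.mpr ⟨hbu, hnt, hnu⟩,
          wcf_esub.mpr ⟨hau, hwt, hwu⟩⟩
    have hNb : NbCF (Tm.esub t u) →
        ¬ IsBangL (Tm.esub t u) ∧ NormalW (Tm.esub t u) ∧ Wcf (Tm.esub t u) := by
      intro h
      cases h with
      | ne h => exact (hNe h).2
      | esub ht hu =>
        obtain ⟨hbt, hnt, hwt⟩ := iht.2.2.1 ht
        obtain ⟨hau, hbu, hnu, hwu⟩ := ihu.1 hu
        exact ⟨by simp [hbt], normalW_esub.mpr ⟨hbu, hnt, hnu⟩,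
          wcf_esub.mpr ⟨hau, hwt, hwu⟩⟩
    refine ⟨hNe, hNa, hNb, ?_⟩
    intro h
    cases h with
    | na h => exact (hNa h).2
    | nb h => exact (hNb h).2

/-! ### Completeness: normal wcf terms are in the grammars -/

lemma cf_complete : ∀ t : Tm, NormalW t → Wcf t →
    NoCF t ∧ (¬ IsAbsL t → NaCF t) ∧ (¬ IsBangL t → NbCF t) ∧
    (¬ IsAbsL t → ¬ IsBangL t → NeCF t) := by
  intro t
  induction t with
  | var k =>
    exact fun _ _ => ⟨.na (.ne (.var k)), fun _ => .ne (.var k),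
      fun _ => .ne (.var k), fun _ _ => .var k⟩
  | app t u iht ihu =>
    intro hn hw
    rw [normalW_app] at hn
    rw [wcf_app] at hw
    obtain ⟨hat, hnt, hnu⟩ := hn
    obtain ⟨hbt, hau, hwt, hwu⟩ := hw
    have he : NeCF t := (iht hnt hwt).2.2.2 hat hbt
    have hu' : NaCF u := (ihu hnu hwu).2.1 hau
    have hne : NeCF (Tm.app t u) := .app he hu'
    exact ⟨.na (.ne hne), fun _ => .ne hne, fun _ => .ne hne, fun _ _ => hne⟩
  | lam t iht =>
    intro hn hw
    have h := (iht (normalW_lam.mp hn) (wcf_lam.mp hw)).1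
    refine ⟨.nb (.lam h), fun ha => absurd (isAbsL_lam t) ha,
      fun _ => .lam h, fun ha _ => absurd (isAbsL_lam t) ha⟩
  | bang t _ =>
    exact fun _ _ => ⟨.na (.bang t), fun _ => .bang t,
      fun hb => absurd (isBangL_bang t) hb, fun _ hb => absurd (isBangL_bang t) hb⟩
  | der t iht =>
    intro hn hw
    rw [normalW_der] at hn
    rw [wcf_der] at hw
    have he : NeCF t := (iht hn.2 hw.2).2.2.2 hw.1 hn.1
    have hne : NeCF (Tm.der t) := .der he
    exact ⟨.na (.ne hne), fun _ => .ne hne, fun _ => .ne hne, fun _ _ => hne⟩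
  | esub t u iht ihu =>
    intro hn hw
    rw [normalW_esub] at hn
    rw [wcf_esub] at hw
    obtain ⟨hbu, hnt, hnu⟩ := hn
    obtain ⟨hau, hwt, hwu⟩ := hw
    have heu : NeCF u := (ihu hnu hwu).2.2.2 hau hbu
    obtain ⟨hno, hna, hnb, hne⟩ := iht hnt hwt
    refine ⟨?_, ?_, ?_, ?_⟩
    · cases hno with
      | na h => exact .na (.esub h heu)
      | nb h => exact .nb (.esub h heu)
    · intro ha
      exact .esub (hna (by simpa using ha)) heu
    · intro hb
      exact .esub (hnb (by simpa using hb)) heu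
    · intro ha hb
      exact .esub (hne (by simpa using ha) (by simpa using hb)) heu

/-- **Characterisation of weak clash free normal forms** (Proposition 2):
`t` is both `→w`-normal and weak clash free iff `t` belongs to the grammar
`no_wcf`. -/
theorem wcf_normal_iff (t : Tm) :
    ((∀ u, ¬ StepW t u) ∧ Wcf t) ↔ NoCF t := by
  constructor
  · rintro ⟨hn, hw⟩
    exact (cf_complete t hn hw).1
  · intro h
    exact (cf_sound t).2.2.2 h
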